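/- Let M be a k-class model (with classes {0,…,k−1}) over a finite feature set X all of whose domains D_y are finite, and let x ∈ X. Then the number of entities e for which x is NOT necessary for the prediction M(e) equals the sum over classes c ∈ {0,…,k−1} of the number of entities e such that M(e_{x=b}) = c for every b ∈ D_x. -/

import Mathlib

/-!
A reason only grows when features are added, so `x` fails to be necessary exactly when
`{x}ᶜ` is already a reason (shrink it to a minimal one, which avoids `x`), i.e. when `M` is
constant on the fiber `{e_{x=b} | b ∈ D x}`. Sorting these entities by that constant value,
which is `M e` itself, gives the sum over classes.
-/

/-- `S` is a reason for the prediction `M e`: every entity agreeing with `e` on `S`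
gets the same prediction. -/
def IsReason {X : Type*} {D : X → Type*} {C : Type*}
    (M : (∀ x, D x) → C) (e : ∀ x, D x) (S : Set X) : Prop :=
  ∀ e' : ∀ x, D x, (∀ x ∈ S, e' x = e x) → M e' = M e

/-- `S` is a sufficient reason: a reason that is minimal with respect to being a reason. -/
def IsSufficientReason {X : Type*} {D : X → Type*} {C : Type*}
    (M : (∀ x, D x) → C) (e : ∀ x, D x) (S : Set X) : Prop :=
  IsReason M e S ∧ ∀ S' ⊂ S, ¬ IsReason M e S'

/-- Feature `x` is necessary for the prediction `M e`: it belongs to every sufficient reason. -/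
def IsNecessary {X : Type*} {D : X → Type*} {C : Type*}
    (M : (∀ x, D x) → C) (e : ∀ x, D x) (x : X) : Prop :=
  ∀ S : Set X, IsSufficientReason M e S → x ∈ S

section

variable {X : Type*} {D : X → Type*} {C : Type*} {M : (∀ x, D x) → C} {e : ∀ x, D x}

theorem IsReason.mono {S T : Set X} (hS : IsReason M e S) (hST : S ⊆ T) : IsReason M e T :=
  fun e' he' => hS e' fun y hy => he' y (hST hy)

theorem IsReason.exists_isSufficientReason_subset [Finite X] {S : Set X}
    (hS : IsReason M e S) : ∃ T ⊆ S, IsSufficientReason M e T := by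
  obtain ⟨T, ⟨hTS, hT⟩, hmin⟩ :=
    wellFounded_lt.has_min {T | T ⊆ S ∧ IsReason M e T} ⟨S, subset_rfl, hS⟩
  exact ⟨T, hTS, hT, fun T' hT'T hT' => hmin T' ⟨hT'T.subset.trans hTS, hT'⟩ hT'T⟩

theorem not_isNecessary_iff_isReason_compl_singleton [Finite X] {x : X} :
    ¬ IsNecessary M e x ↔ IsReason M e {x}ᶜ := by
  simp only [IsNecessary, not_forall, exists_prop]
  constructor
  · rintro ⟨S, hS, hxS⟩
    exact hS.1.mono (Set.subset_compl_singleton_iff.2 hxS)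
  · intro h
    obtain ⟨T, hTx, hT⟩ := h.exists_isSufficientReason_subset
    exact ⟨T, hT, fun hx => hTx hx rfl⟩

theorem isReason_compl_singleton_iff [DecidableEq X] {x : X} :
    IsReason M e {x}ᶜ ↔ ∀ b, M (Function.update e x b) = M e := by
  constructor
  · exact fun h b => h _ fun y hy => Function.update_of_ne hy _ _
  · intro h e' he'
    rw [Function.eq_update_iff.2 ⟨rfl, he'⟩, h]

theorem forall_update_eq_iff [DecidableEq X] {x : X} {c : C} :
    (∀ b, M (Function.update e x b) = c) ↔ M e = c ∧ ∀ b, M (Function.update e x b) = M e := by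
  constructor
  · intro h
    have hc : M e = c := by simpa using h (e x)
    exact ⟨hc, fun b => (h b).trans hc.symm⟩
  · rintro ⟨rfl, h⟩
    exact h

end

theorem card_not_necessary_eq_sum_card_constant_on_fiber_general
    {X : Type*} [Fintype X] [DecidableEq X]
    {D : X → Type*} [∀ x, Fintype (D x)]
    {k : ℕ} (M : (∀ x, D x) → Fin k) (x : X) :
    Nat.card {e : ∀ y, D y // ¬ IsNecessary M e x} =
      ∑ c : Fin k,
        Nat.card {e : ∀ y, D y // ∀ b : D x, M (Function.update e x b) = c} := by
  classical
  simp only [Nat.card_eq_fintype_card, Fintype.card_subtype,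
    not_isNecessary_iff_isReason_compl_singleton, isReason_compl_singleton_iff]
  rw [Finset.card_eq_sum_card_fiberwise (f := M) (t := Finset.univ) fun _ _ => Finset.mem_univ _]
  refine Finset.sum_congr rfl fun c _ => ?_
  rw [Finset.filter_filter]
  congr 1
  ext e
  simp only [Finset.mem_filter, Finset.mem_univ, true_and]
  exact and_comm.trans forall_update_eq_iff.symm

/-- The number of entities for which `x` is not necessary equals the sum over the classes
`c ∈ {0, …, k-1}` of the number of entities `e` such that `M (e_{x = b}) = c` for every
`b ∈ D x`. -/
theorem card_not_necessary_eq_sum_card_constant_on_fiber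
    {X : Type*} [Fintype X] [DecidableEq X]
    {D : X → Type*} [∀ x, Fintype (D x)] [∀ x, Nonempty (D x)]
    {k : ℕ} (M : (∀ x, D x) → Fin k) (x : X) :
    Nat.card {e : ∀ y, D y // ¬ IsNecessary M e x} =
      ∑ c : Fin k,
        Nat.card {e : ∀ y, D y // ∀ b : D x, M (Function.update e x b) = c} :=
  card_not_necessary_eq_sum_card_constant_on_fiber_general M x
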